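/- Let F be a non-empty totally bounded subset of a uniformly perfect metric space with more than one point, with 0 < dim_A F < ∞, and let θ ∈ (0,1). Then the map θ' ↦ dim_{θ'}_upper F is Lipschitz on [θ,1] with Lipschitz constant dim_A F/(4θ); the same holds for θ' ↦ dim_{θ'}_lower F. -/

import Mathlib

open Metric Set Filter MeasureTheory Topology

/-- A metric space is `c`-uniformly perfect for some `c ∈ (0,1)`:
for all `x` and `0 < R < diam X`, `B(x,R) \ B(x,cR) ≠ ∅`. -/
def UniformlyPerfect (X : Type*) [MetricSpace X] : Prop :=
  ∃ c : ℝ, 0 < c ∧ c < 1 ∧ ∀ (x : X) (R : ℝ), 0 < R →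
    ENNReal.ofReal R < EMetric.diam (Set.univ : Set X) →
    ∃ y : X, dist x y < R ∧ c * R ≤ dist x y

/-- `Φ` is admissible: on some interval `(0,Y)` it satisfies `0 < Φ(δ) ≤ δ`,
`Φ(δ)/δ → 0` as `δ → 0⁺`, and `Φ` is monotonic on `(0,Y)`. -/
def Admissible (Φ : ℝ → ℝ) : Prop :=
  ∃ Y : ℝ, 0 < Y ∧ (∀ δ ∈ Set.Ioo (0:ℝ) Y, 0 < Φ δ ∧ Φ δ ≤ δ) ∧
    Filter.Tendsto (fun δ => Φ δ / δ) (nhdsWithin 0 (Set.Ioi 0)) (nhds 0) ∧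
    (MonotoneOn Φ (Set.Ioo 0 Y) ∨ AntitoneOn Φ (Set.Ioo 0 Y))

/-- There is a (finite) cover of `F` by sets of diameter in `[Φ(δ), δ]`
whose `s`-diameter sum is at most `ε`. -/
def CoverSum {X : Type*} [MetricSpace X] (Φ : ℝ → ℝ) (s ε δ : ℝ) (F : Set X) : Prop :=
  ∃ (n : ℕ) (U : Fin n → Set X), F ⊆ ⋃ i, U i ∧
    (∀ i, Φ δ ≤ Metric.diam (U i) ∧ Metric.diam (U i) ≤ δ) ∧
    ∑ i, Metric.diam (U i) ^ s ≤ ε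

/-- The upper `Φ`-intermediate dimension. -/
noncomputable def upperPhiDim {X : Type*} [MetricSpace X] (Φ : ℝ → ℝ) (F : Set X) : ℝ :=
  sInf {s : ℝ | 0 ≤ s ∧ ∀ ε : ℝ, 0 < ε → ∃ δ₀ ∈ Set.Ioc (0:ℝ) 1,
    ∀ δ ∈ Set.Ioo (0:ℝ) δ₀, CoverSum Φ s ε δ F}

/-- The lower `Φ`-intermediate dimension. -/
noncomputable def lowerPhiDim {X : Type*} [MetricSpace X] (Φ : ℝ → ℝ) (F : Set X) : ℝ :=
  sInf {s : ℝ | 0 ≤ s ∧ ∀ ε : ℝ, 0 < ε → ∀ δ₀ ∈ Set.Ioc (0:ℝ) 1,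
    ∃ δ ∈ Set.Ioo (0:ℝ) δ₀, CoverSum Φ s ε δ F}

/-- The smallest number of sets of diameter at most `δ` needed to cover `F`. -/
noncomputable def coverNum {X : Type*} [MetricSpace X] (F : Set X) (δ : ℝ) : ℕ :=
  sInf {n : ℕ | ∃ U : Fin n → Set X, F ⊆ ⋃ i, U i ∧ ∀ i, Metric.diam (U i) ≤ δ}

/-- Upper box (Minkowski) dimension. -/
noncomputable def upperBoxDim {X : Type*} [MetricSpace X] (F : Set X) : ℝ :=
  Filter.limsup (fun δ : ℝ => Real.log (coverNum F δ) / -Real.log δ)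
    (nhdsWithin 0 (Set.Ioi 0))

/-- Lower box (Minkowski) dimension. -/
noncomputable def lowerBoxDim {X : Type*} [MetricSpace X] (F : Set X) : ℝ :=
  Filter.liminf (fun δ : ℝ => Real.log (coverNum F δ) / -Real.log δ)
    (nhdsWithin 0 (Set.Ioi 0))

/-- `α` witnesses the Assouad dimension bound for `F`. -/
def IsAssouadBound {X : Type*} [MetricSpace X] (F : Set X) (α : ℝ) : Prop :=
  0 ≤ α ∧ ∃ C : ℝ, 0 < C ∧ ∀ x ∈ F, ∀ r R : ℝ, 0 < r → r < R →
    (coverNum (Metric.ball x R ∩ F) r : ℝ) ≤ C * (R / r) ^ α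

/-- The Assouad dimension (junk value `0` if no bound exists). -/
noncomputable def assouadDim {X : Type*} [MetricSpace X] (F : Set X) : ℝ :=
  sInf {α : ℝ | IsAssouadBound F α}

/-- The upper `θ`-intermediate dimension: Hausdorff dimension at `θ = 0`,
upper box dimension at `θ = 1`, and `upperPhiDim` with `Φ(δ) = δ^(1/θ)` in between. -/
noncomputable def upperThetaDim {X : Type*} [MetricSpace X] (θ : ℝ) (F : Set X) : ℝ :=
  if θ = 0 then (dimH F).toReal
  else if θ = 1 then upperBoxDim F
  else upperPhiDim (fun δ => δ ^ (1/θ)) F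

/-- The lower `θ`-intermediate dimension. -/
noncomputable def lowerThetaDim {X : Type*} [MetricSpace X] (θ : ℝ) (F : Set X) : ℝ :=
  if θ = 0 then (dimH F).toReal
  else if θ = 1 then lowerBoxDim F
  else lowerPhiDim (fun δ => δ ^ (1/θ)) F


/-!
Fix `θ ≤ a < b < 1` and an Assouad exponent `α` of `F`. A cover of `F` at scale `δ ^ γ` whose
sets have diameters in `[δ ^ (γ / a), δ ^ γ]` is refined into one at scale `δ` with diameters in
`[δ ^ (1 / b), δ]`: sets that are too small are enlarged, which uniform perfectness allows at a
bounded cost, and a set of diameter `d > δ / 2` is cut, by the Assouad bound, into at most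
`C (4 d / δ) ^ α` sets of diameter `δ / 2`. An exponent `s` for the `a`-dimension thus yields
every exponent `t` with `γ s / a ≤ t / b` and `α ≤ t + γ (α - s)`; the best `γ` together with
AM-GM gives `t = s + (b - a) α / (4 a)`, whence `dim_b ≤ dim_a + (b - a) dim_A / (4 θ)`, while
`dim_a ≤ dim_b` is immediate. At `b = 1`, a cover admissible for the `b`-dimension also bounds
covering numbers, so `b · dim_B ≤ dim_b`, and one lets `b → 1`.
-/

open Bornology

section Covers

variable {X : Type*} [MetricSpace X]

lemma CoverSum.intro {Φ : ℝ → ℝ} {s ε δ : ℝ} {F : Set X} {ι : Type*} [Fintype ι]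
    (U : ι → Set X) (hcov : F ⊆ ⋃ i, U i)
    (hdiam : ∀ i, Φ δ ≤ diam (U i) ∧ diam (U i) ≤ δ) (hsum : ∑ i, diam (U i) ^ s ≤ ε) :
    CoverSum Φ s ε δ F := by
  let e := Fintype.equivFin ι
  refine ⟨Fintype.card ι, U ∘ e.symm, fun x hx => ?_, fun j => hdiam _, ?_⟩
  · obtain ⟨i, hi⟩ := mem_iUnion.1 (hcov hx)
    exact mem_iUnion.2 ⟨e i, by simpa using hi⟩
  · rwa [Function.comp_def, e.symm.sum_comp (fun i => diam (U i) ^ s)]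

lemma CoverSum.mono {Φ : ℝ → ℝ} {s ε ε' δ : ℝ} {F F' : Set X} (h : CoverSum Φ s ε δ F)
    (hF : F' ⊆ F) (hε : ε ≤ ε') : CoverSum Φ s ε' δ F' := by
  obtain ⟨n, U, hcov, hdiam, hsum⟩ := h
  exact ⟨n, U, hF.trans hcov, hdiam, hsum.trans hε⟩

lemma coverSum_empty {Φ : ℝ → ℝ} {s ε δ : ℝ} (hε : 0 ≤ ε) : CoverSum Φ s ε δ (∅ : Set X) :=
  ⟨0, Fin.elim0, empty_subset _, fun i => i.elim0, by simpa using hε⟩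

lemma CoverSum.iUnion {Φ : ℝ → ℝ} {s δ : ℝ} {F : Set X} {ι : Type*} [Fintype ι]
    {T : ι → Set X} {ε : ι → ℝ} (hF : F ⊆ ⋃ i, T i) (h : ∀ i, CoverSum Φ s (ε i) δ (T i)) :
    CoverSum Φ s (∑ i, ε i) δ F := by
  choose n U hcov hdiam hsum using h
  refine CoverSum.intro (fun p : (i : ι) × Fin (n i) => U p.1 p.2) (fun x hx => ?_)
    (fun p => hdiam p.1 p.2) ?_
  · obtain ⟨i, hi⟩ := mem_iUnion.1 (hF hx)
    obtain ⟨j, hj⟩ := mem_iUnion.1 (hcov i hi)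
    exact mem_iUnion.2 ⟨⟨i, j⟩, hj⟩
  · rw [← Finset.univ_sigma_univ, Finset.sum_sigma]
    exact Finset.sum_le_sum fun i _ => hsum i

lemma coverNum_le_of_cover {F : Set X} {δ : ℝ} {n : ℕ} (U : Fin n → Set X)
    (hcov : F ⊆ ⋃ i, U i) (hdiam : ∀ i, diam (U i) ≤ δ) : coverNum F δ ≤ n :=
  Nat.sInf_le ⟨U, hcov, hdiam⟩

lemma TotallyBounded.exists_cover_coverNum {F : Set X} (hF : TotallyBounded F) {δ : ℝ}
    (hδ : 0 < δ) : ∃ U : Fin (coverNum F δ) → Set X, F ⊆ ⋃ i, U i ∧ ∀ i, diam (U i) ≤ δ := by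
  refine Nat.sInf_mem (s := {n | ∃ U : Fin n → Set X, F ⊆ ⋃ i, U i ∧ ∀ i, diam (U i) ≤ δ}) ?_
  obtain ⟨t, ht, hFt⟩ := Metric.totallyBounded_iff.1 hF (δ / 2) (half_pos hδ)
  let e := ht.fintype.equivFin
  refine ⟨_, fun j => ball (e.symm j : X) (δ / 2), fun x hx => ?_, fun j => ?_⟩
  · obtain ⟨y, hy, hxy⟩ := mem_iUnion₂.1 (hFt hx)
    exact mem_iUnion.2 ⟨e ⟨y, hy⟩, by simpa using hxy⟩
  · exact (diam_ball (half_pos hδ).le).trans_eq (by ring)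

lemma one_le_coverNum {F : Set X} (hne : F.Nonempty) (hF : TotallyBounded F) {δ : ℝ}
    (hδ : 0 < δ) : 1 ≤ coverNum F δ := by
  obtain ⟨U, hcov, -⟩ := hF.exists_cover_coverNum hδ
  obtain ⟨i, -⟩ := mem_iUnion.1 (hcov hne.some_mem)
  exact Nat.one_le_iff_ne_zero.2 (Fin.pos i).ne'

lemma CoverSum.coverNum_mul_rpow_le {Φ : ℝ → ℝ} {s ε δ : ℝ} {F : Set X}
    (h : CoverSum Φ s ε δ F) (hΦ : 0 ≤ Φ δ) (hs : 0 ≤ s) : coverNum F δ * Φ δ ^ s ≤ ε := by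
  obtain ⟨n, U, hcov, hdiam, hsum⟩ := h
  calc (coverNum F δ : ℝ) * Φ δ ^ s ≤ n * Φ δ ^ s := by
        gcongr
        exact coverNum_le_of_cover U hcov fun i => (hdiam i).2
    _ = ∑ i, Φ δ ^ s := by simp
    _ ≤ ε := (Finset.sum_le_sum fun i _ => Real.rpow_le_rpow hΦ (hdiam i).1 hs).trans hsum

end Covers

section Scales

lemma hasBasis_nhdsGT_zero_Ioc : (𝓝[>] (0:ℝ)).HasBasis (· ∈ Ioc (0:ℝ) 1) (Ioo 0) :=
  (nhdsGT_basis 0).to_hasBasis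
    (fun δ hδ => ⟨min δ 1, ⟨lt_min hδ one_pos, min_le_right _ _⟩,
      Ioo_subset_Ioo_right (min_le_left _ _)⟩)
    (fun δ hδ => ⟨δ, hδ.1, subset_rfl⟩)

lemma eventually_mem_Ioo_zero_one : ∀ᶠ δ in 𝓝[>] (0:ℝ), δ ∈ Ioo 0 1 :=
  Ioo_mem_nhdsGT one_pos

lemma Filter.map_eq_self_of_rightInverse {α : Type*} {l : Filter α} {f g : α → α}
    (hf : Tendsto f l l) (hg : Tendsto g l l) (hfg : ∀ᶠ x in l, f (g x) = x) : map f l = l :=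
  le_antisymm hf <| calc
    l = map (f ∘ g) l := by rw [map_congr (m₁ := f ∘ g) (m₂ := id) hfg, map_id]
    _ ≤ map f l := by rw [← map_map]; exact map_mono hg

lemma tendsto_rpow_nhdsGT_zero {γ : ℝ} (hγ : 0 < γ) :
    Tendsto (· ^ γ) (𝓝[>] (0:ℝ)) (𝓝[>] 0) := by
  refine tendsto_nhdsWithin_iff.2 ⟨?_, eventually_mem_nhdsWithin.mono fun δ hδ => ?_⟩
  · have := (Real.continuousAt_rpow_const 0 γ (Or.inr hγ.le)).tendsto
    rw [Real.zero_rpow hγ.ne'] at this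
    exact this.mono_left nhdsWithin_le_nhds
  · exact Real.rpow_pos_of_pos hδ γ

lemma map_rpow_nhdsGT_zero {γ : ℝ} (hγ : 0 < γ) : map (· ^ γ) (𝓝[>] (0:ℝ)) = 𝓝[>] 0 :=
  Filter.map_eq_self_of_rightInverse (tendsto_rpow_nhdsGT_zero hγ)
    (tendsto_rpow_nhdsGT_zero (inv_pos.2 hγ))
    (eventually_mem_nhdsWithin.mono fun _ hδ => Real.rpow_inv_rpow (le_of_lt hδ) hγ.ne')

lemma map_div_const_nhdsGT_zero {c : ℝ} (hc : 0 < c) : map (· / c) (𝓝[>] (0:ℝ)) = 𝓝[>] 0 := by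
  simp_rw [div_eq_inv_mul]
  nth_rewrite 1 [← comap_mulLeft_nhdsGT_zero (inv_pos.2 hc)]
  exact map_comap_of_surjective (mul_left_surjective₀ (inv_ne_zero hc.ne')) _

lemma eventually_const_mul_rpow_le {p : ℝ} (hp : 0 < p) (C : ℝ) {ε : ℝ} (hε : 0 < ε) :
    ∀ᶠ δ in 𝓝[>] (0:ℝ), C * δ ^ p ≤ ε := by
  have := ((tendsto_rpow_nhdsGT_zero hp).mono_right nhdsWithin_le_nhds).const_mul C
  rw [mul_zero] at this
  exact (this.eventually_lt_const hε).mono fun δ hδ => hδ.le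

lemma eventually_const_mul_rpow_neg_le {α u : ℝ} (hαu : α < u) (C : ℝ) :
    ∀ᶠ δ in 𝓝[>] (0:ℝ), C * δ ^ (-α) ≤ δ ^ (-u) := by
  filter_upwards [eventually_const_mul_rpow_le (sub_pos.2 hαu) C one_pos,
    eventually_mem_nhdsWithin] with δ hδ (hδ0 : 0 < δ)
  calc C * δ ^ (-α) = C * δ ^ (u - α) * δ ^ (-u) := by
        rw [mul_assoc, ← Real.rpow_add hδ0]; ring_nf
    _ ≤ δ ^ (-u) := mul_le_of_le_one_left (Real.rpow_nonneg hδ0.le _) hδ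

end Scales

section BoxDimension

variable {X : Type*} [MetricSpace X]

/-- By definition, `upperBoxDim F` and `lowerBoxDim F` are the `limsup` and `liminf` of
`coverDimRatio F` as `δ → 0⁺`. -/
noncomputable def coverDimRatio (F : Set X) (δ : ℝ) : ℝ :=
  Real.log (coverNum F δ) / -Real.log δ

lemma coverDimRatio_nonneg (F : Set X) {δ : ℝ} (hδ : δ ∈ Ioo 0 1) : 0 ≤ coverDimRatio F δ :=
  div_nonneg (Real.log_natCast_nonneg _) (neg_nonneg.2 (Real.log_nonpos hδ.1.le hδ.2.le))

lemma isBoundedUnder_ge_coverDimRatio (F : Set X) :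
    IsBoundedUnder (· ≥ ·) (𝓝[>] 0) (coverDimRatio F) :=
  ⟨0, eventually_map.2 (eventually_mem_Ioo_zero_one.mono fun _ => coverDimRatio_nonneg F)⟩

lemma coverDimRatio_le_iff {F : Set X} (hne : F.Nonempty) (hF : TotallyBounded F) {δ t : ℝ}
    (hδ : δ ∈ Ioo 0 1) : coverDimRatio F δ ≤ t ↔ (coverNum F δ : ℝ) ≤ δ ^ (-t) := by
  have hN : (0 : ℝ) < coverNum F δ := by exact_mod_cast one_le_coverNum hne hF hδ.1
  rw [coverDimRatio, div_le_iff₀ (neg_pos.2 (Real.log_neg hδ.1 hδ.2)),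
    Real.le_rpow_iff_log_le hN hδ.1, neg_mul, mul_neg]

lemma upperBoxDim_le_of_eventually {F : Set X} (hne : F.Nonempty) (hF : TotallyBounded F)
    {t : ℝ} (h : ∀ᶠ δ in 𝓝[>] 0, (coverNum F δ : ℝ) ≤ δ ^ (-t)) : upperBoxDim F ≤ t :=
  limsup_le_of_le (isBoundedUnder_ge_coverDimRatio F).isCoboundedUnder_le
    ((h.and eventually_mem_Ioo_zero_one).mono fun _ hδ =>
      (coverDimRatio_le_iff hne hF hδ.2).2 hδ.1)

lemma lowerBoxDim_le_of_frequently {F : Set X} (hne : F.Nonempty) (hF : TotallyBounded F)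
    {t : ℝ} (h : ∃ᶠ δ in 𝓝[>] 0, (coverNum F δ : ℝ) ≤ δ ^ (-t)) : lowerBoxDim F ≤ t :=
  liminf_le_of_frequently_le
    ((h.and_eventually eventually_mem_Ioo_zero_one).mono fun _ hδ =>
      (coverDimRatio_le_iff hne hF hδ.2).2 hδ.1) (isBoundedUnder_ge_coverDimRatio F)

lemma isBoundedUnder_coverDimRatio {F : Set X} (hne : F.Nonempty) (hF : TotallyBounded F)
    {u : ℝ} (h : ∀ᶠ δ in 𝓝[>] 0, (coverNum F δ : ℝ) ≤ δ ^ (-u)) :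
    IsBoundedUnder (· ≤ ·) (𝓝[>] 0) (coverDimRatio F) :=
  ⟨u, eventually_map.2 ((h.and eventually_mem_Ioo_zero_one).mono fun _ hδ =>
    (coverDimRatio_le_iff hne hF hδ.2).2 hδ.1)⟩

lemma eventually_coverNum_le_of_upperBoxDim_lt {F : Set X} (hne : F.Nonempty)
    (hF : TotallyBounded F) (hbdd : IsBoundedUnder (· ≤ ·) (𝓝[>] 0) (coverDimRatio F)) {t : ℝ}
    (ht : upperBoxDim F < t) : ∀ᶠ δ in 𝓝[>] 0, (coverNum F δ : ℝ) ≤ δ ^ (-t) :=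
  ((eventually_lt_of_limsup_lt ht hbdd).and eventually_mem_Ioo_zero_one).mono fun _ hδ =>
    (coverDimRatio_le_iff hne hF hδ.2).1 hδ.1.le

lemma frequently_coverNum_le_of_lowerBoxDim_lt {F : Set X} (hne : F.Nonempty)
    (hF : TotallyBounded F) (hbdd : IsBoundedUnder (· ≤ ·) (𝓝[>] 0) (coverDimRatio F)) {t : ℝ}
    (ht : lowerBoxDim F < t) : ∃ᶠ δ in 𝓝[>] 0, (coverNum F δ : ℝ) ≤ δ ^ (-t) :=
  ((frequently_lt_of_liminf_lt hbdd.isCoboundedUnder_ge ht).and_eventually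
    eventually_mem_Ioo_zero_one).mono fun _ hδ => (coverDimRatio_le_iff hne hF hδ.2).1 hδ.1.le

end BoxDimension

section Assouad

variable {X : Type*} [MetricSpace X]

lemma IsAssouadBound.mono {F : Set X} {α β : ℝ} (h : IsAssouadBound F α) (hαβ : α ≤ β) :
    IsAssouadBound F β := by
  obtain ⟨hα, C, hC, hbound⟩ := h
  refine ⟨hα.trans hαβ, C, hC, fun x hx r R hr hrR => (hbound x hx r R hr hrR).trans ?_⟩
  gcongr
  exact (one_le_div hr).2 hrR.le

lemma isAssouadBound_of_assouadDim_lt {F : Set X} (hA : ∃ α, IsAssouadBound F α) {β : ℝ}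
    (hβ : assouadDim F < β) : IsAssouadBound F β := by
  obtain ⟨α, hα, hαβ⟩ := exists_lt_of_csInf_lt hA hβ
  exact IsAssouadBound.mono hα hαβ.le

/-- If `X` is unbounded then `diam univ = 0` by convention, so `univ` alone covers every set at
every scale and the Assouad dimension collapses to `0`. -/
lemma boundedSpace_of_assouadDim_pos {F : Set X} (hpos : 0 < assouadDim F) : BoundedSpace X := by
  by_contra hX
  rw [← isBounded_univ] at hX
  have hzero : IsAssouadBound F 0 := by
    refine ⟨le_rfl, 1, one_pos, fun x _ r R hr _ => ?_⟩
    have : coverNum (ball x R ∩ F) r ≤ 1 :=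
      coverNum_le_of_cover (fun _ : Fin 1 => univ) (fun z _ => mem_iUnion.2 ⟨0, trivial⟩)
        fun _ => (diam_eq_zero_of_unbounded hX).trans_le hr.le
    simpa using this
  exact hpos.not_ge (csInf_le ⟨0, fun _ h => h.1⟩ hzero)

lemma IsAssouadBound.eventually_coverNum_le {F : Set X} {α u : ℝ} (h : IsAssouadBound F α)
    (hne : F.Nonempty) (hF : TotallyBounded F) (hαu : α < u) :
    ∀ᶠ δ in 𝓝[>] 0, (coverNum F δ : ℝ) ≤ δ ^ (-u) := by
  obtain ⟨-, C, -, hbound⟩ := h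
  obtain ⟨x, hx⟩ := hne
  set R := diam F + 1
  have hR : 0 < R := by positivity
  have hball : ball x R ∩ F = F := inter_eq_self_of_subset_right fun z hz =>
    mem_ball.2 ((dist_le_diam_of_mem hF.isBounded hz hx).trans_lt (lt_add_one _))
  filter_upwards [eventually_const_mul_rpow_neg_le hαu (C * R ^ α),
    Ioo_mem_nhdsGT hR] with δ hδ hδR
  calc (coverNum F δ : ℝ) ≤ C * (R / δ) ^ α := hball ▸ hbound x hx δ R hδR.1 hδR.2
    _ = C * R ^ α * δ ^ (-α) := by
      rw [Real.div_rpow hR.le hδR.1.le, Real.rpow_neg hδR.1.le, div_eq_mul_inv, mul_assoc]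
    _ ≤ δ ^ (-u) := hδ

lemma assouadDim_nonneg {F : Set X} (hA : ∃ α, IsAssouadBound F α) : 0 ≤ assouadDim F :=
  le_csInf hA fun _ h => h.1

lemma upperBoxDim_le_assouadDim {F : Set X} (hne : F.Nonempty) (hF : TotallyBounded F)
    (hA : ∃ α, IsAssouadBound F α) : upperBoxDim F ≤ assouadDim F :=
  le_of_forall_gt_imp_ge_of_dense fun _ hu => upperBoxDim_le_of_eventually hne hF <|
    (isAssouadBound_of_assouadDim_lt hA (left_lt_add_div_two.2 hu)).eventually_coverNum_le hne hF
      (add_div_two_lt_right.2 hu)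

lemma lowerBoxDim_le_assouadDim {F : Set X} (hne : F.Nonempty) (hF : TotallyBounded F)
    (hA : ∃ α, IsAssouadBound F α) : lowerBoxDim F ≤ assouadDim F :=
  le_of_forall_gt_imp_ge_of_dense fun _ hu => lowerBoxDim_le_of_frequently hne hF <|
    ((isAssouadBound_of_assouadDim_lt hA (left_lt_add_div_two.2 hu)).eventually_coverNum_le hne hF
      (add_div_two_lt_right.2 hu)).frequently

end Assouad

section Fattening

variable (X : Type*) [MetricSpace X]

def FattensAt (κ m : ℝ) : Prop :=
  ∀ W : Set X, ∃ V, W ⊆ V ∧ m ≤ diam V ∧ diam V ≤ diam W + κ * m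

variable {X}

lemma exists_diam_insert_eq [Nonempty X] (W : Set X) : ∃ x, diam (insert x W) = diam W := by
  rcases W.eq_empty_or_nonempty with rfl | ⟨x, hx⟩
  · exact ⟨Classical.arbitrary X, by simp⟩
  · exact ⟨x, by rw [insert_eq_of_mem hx]⟩

lemma UniformlyPerfect.eventually_fattensAt [Nontrivial X] [BoundedSpace X]
    (h : UniformlyPerfect X) : ∃ κ, 0 ≤ κ ∧ ∀ᶠ m in 𝓝[>] 0, FattensAt X κ m := by
  obtain ⟨c, hc0, -, hc⟩ := h
  have hD : 0 < diam (univ : Set X) := diam_pos nontrivial_univ (IsBounded.all _)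
  refine ⟨1 / c, by positivity, ?_⟩
  filter_upwards [Ioo_mem_nhdsGT (mul_pos hc0 hD)] with m hm W
  obtain ⟨x, hx⟩ := exists_diam_insert_eq W
  have hR : 0 < m / c := div_pos hm.1 hc0
  have hRD : ENNReal.ofReal (m / c) < ediam (univ : Set X) := by
    rw [ENNReal.ofReal_lt_iff_lt_toReal hR.le (isBounded_iff_ediam_ne_top.1 (IsBounded.all _))]
    exact (div_lt_iff₀' hc0).2 hm.2
  obtain ⟨y, hxy, hcxy⟩ := hc x (m / c) hR hRD
  refine ⟨insert x W ∪ {y}, (subset_insert x W).trans subset_union_left, ?_, ?_⟩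
  · calc m = c * (m / c) := by field_simp
      _ ≤ dist x y := hcxy
      _ ≤ _ := dist_le_diam_of_mem (IsBounded.all _) (Or.inl (mem_insert x W)) (Or.inr rfl)
  · calc diam (insert x W ∪ {y}) ≤ diam (insert x W) + dist x y + diam {y} :=
          diam_union (mem_insert x W) rfl
      _ ≤ diam W + 1 / c * m := by
          rw [hx, diam_singleton]
          linarith [show m / c = 1 / c * m by ring]

end Fattening

section Refinement

variable {X : Type*} [MetricSpace X] {Φ : ℝ → ℝ} {κ s t δ : ℝ}

lemma TotallyBounded.coverSum_coverNum_half {S : Set X} (hS : TotallyBounded S) (ht : 0 ≤ t)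
    (hδ : 0 < δ) (hfat : FattensAt X κ (Φ δ)) (hsmall : κ * Φ δ ≤ δ / 2) :
    CoverSum Φ t (coverNum S (δ / 2) * δ ^ t) δ S := by
  obtain ⟨W, hcov, hW⟩ := hS.exists_cover_coverNum (half_pos hδ)
  choose V hWV hΦV hV using fun j => hfat (W j)
  have hVδ : ∀ j, diam (V j) ≤ δ := fun j => by linarith [hV j, hW j]
  refine ⟨_, V, hcov.trans (iUnion_mono hWV), fun j => ⟨hΦV j, hVδ j⟩, ?_⟩
  calc ∑ j, diam (V j) ^ t ≤ ∑ _j : Fin (coverNum S (δ / 2)), δ ^ t :=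
        Finset.sum_le_sum fun j _ => Real.rpow_le_rpow diam_nonneg (hVδ j) ht
    _ = coverNum S (δ / 2) * δ ^ t := by simp

lemma coverSum_of_diam_le_half {U : Set X} (hκ : 0 ≤ κ) (ht : 0 ≤ t) (hΦ : 0 ≤ Φ δ)
    (hfat : FattensAt X κ (Φ δ)) (hsmall : κ * Φ δ ≤ δ / 2) (hU : diam U ≤ δ / 2)
    (hUt : diam U ^ t ≤ diam U ^ s) (hΦt : Φ δ ^ t ≤ diam U ^ s) :
    CoverSum Φ t ((1 + κ) ^ t * diam U ^ s) δ U := by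
  obtain ⟨V, hUV, hΦV, hV⟩ := hfat U
  set M := max (diam U) (Φ δ)
  have hM : M ^ t ≤ diam U ^ s := by
    rcases le_total (diam U) (Φ δ) with h | h
    · rwa [show M = Φ δ from max_eq_right h]
    · rwa [show M = diam U from max_eq_left h]
  have hVM : diam V ≤ (1 + κ) * M := by
    nlinarith [le_max_left (diam U) (Φ δ), le_max_right (diam U) (Φ δ)]
  refine ⟨1, fun _ => V, fun x hx => mem_iUnion.2 ⟨0, hUV hx⟩,
    fun _ => ⟨hΦV, by linarith⟩, ?_⟩
  calc ∑ _i : Fin 1, diam V ^ t = diam V ^ t := by simp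
    _ ≤ ((1 + κ) * M) ^ t := Real.rpow_le_rpow diam_nonneg hVM ht
    _ = (1 + κ) ^ t * M ^ t := Real.mul_rpow (by linarith) (hΦ.trans (le_max_right _ _))
    _ ≤ (1 + κ) ^ t * diam U ^ s := by gcongr

lemma coverSum_inter_of_half_lt_diam {F U : Set X} (hF : TotallyBounded F) {α C : ℝ}
    (hC : ∀ x ∈ F, ∀ r R : ℝ, 0 < r → r < R → (coverNum (ball x R ∩ F) r : ℝ) ≤ C * (R / r) ^ α)
    (hC0 : 0 ≤ C) (ht : 0 ≤ t) (hδ : 0 < δ) (hfat : FattensAt X κ (Φ δ))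
    (hsmall : κ * Φ δ ≤ δ / 2) (hU : δ / 2 < diam U)
    (hUα : diam U ^ α * δ ^ t ≤ diam U ^ s * δ ^ α) :
    CoverSum Φ t (C * 4 ^ α * diam U ^ s) δ (U ∩ F) := by
  set d := diam U
  have hd : 0 < d := by linarith
  rcases (U ∩ F).eq_empty_or_nonempty with hUF | ⟨x, hxU, hxF⟩
  · rw [hUF]
    exact coverSum_empty (by positivity)
  have hUbdd : IsBounded U := by
    by_contra h
    exact hd.ne' (diam_eq_zero_of_unbounded h)
  have hUF : U ∩ F ⊆ ball x (2 * d) ∩ F := fun z hz =>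
    ⟨mem_ball.2 ((dist_le_diam_of_mem hUbdd hz.1 hxU).trans_lt (by linarith)), hz.2⟩
  refine ((hF.subset inter_subset_right).coverSum_coverNum_half ht hδ hfat hsmall).mono hUF ?_
  calc (coverNum (ball x (2 * d) ∩ F) (δ / 2) : ℝ) * δ ^ t
      ≤ C * (2 * d / (δ / 2)) ^ α * δ ^ t := by
        gcongr
        exact hC x hxF _ _ (half_pos hδ) (by linarith)
    _ = C * 4 ^ α * (d ^ α * δ ^ t) / δ ^ α := by
        rw [show 2 * d / (δ / 2) = 4 * d / δ by field_simp; ring,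
          Real.div_rpow (by positivity) hδ.le, Real.mul_rpow (by norm_num) hd.le]
        ring
    _ ≤ C * 4 ^ α * (d ^ s * δ ^ α) / δ ^ α := by gcongr
    _ = C * 4 ^ α * d ^ s := by field_simp

end Refinement

section Transfer

variable {X : Type*} [MetricSpace X]

lemma coverSum_inter_of_diam_pos {Φ : ℝ → ℝ} {F U : Set X} (hF : TotallyBounded F)
    {α C κ s t δ : ℝ}
    (hC : ∀ x ∈ F, ∀ r R : ℝ, 0 < r → r < R → (coverNum (ball x R ∩ F) r : ℝ) ≤ C * (R / r) ^ α)
    (hC0 : 0 ≤ C) (hκ : 0 ≤ κ) (ht : 0 ≤ t) (hδ : 0 < δ) (hΦ : 0 ≤ Φ δ)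
    (hfat : FattensAt X κ (Φ δ)) (hsmall : κ * Φ δ ≤ δ / 2) (hd : 0 < diam U)
    (hUt : diam U ^ t ≤ diam U ^ s) (hΦt : Φ δ ^ t ≤ diam U ^ s)
    (hUα : diam U ^ α * δ ^ t ≤ diam U ^ s * δ ^ α) :
    CoverSum Φ t (((1 + κ) ^ t + C * 4 ^ α) * diam U ^ s) δ (U ∩ F) := by
  have hds : 0 ≤ diam U ^ s := Real.rpow_nonneg hd.le s
  rw [add_mul]
  rcases le_or_gt (diam U) (δ / 2) with hU | hU
  · refine (coverSum_of_diam_le_half hκ ht hΦ hfat hsmall hU hUt hΦt).mono inter_subset_left ?_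
    have : 0 ≤ C * 4 ^ α * diam U ^ s := by positivity
    linarith
  · refine (coverSum_inter_of_half_lt_diam hF hC hC0 ht hδ hfat hsmall hU hUα).mono subset_rfl ?_
    have : 0 ≤ (1 + κ) ^ t * diam U ^ s := by positivity
    linarith

lemma CoverSum.refine {Ψ Φ : ℝ → ℝ} {F : Set X} {s t ε η δ K : ℝ} (h : CoverSum Ψ s ε η F)
    (hK : 0 ≤ K)
    (hper : ∀ U : Set X, Ψ η ≤ diam U → diam U ≤ η → CoverSum Φ t (K * diam U ^ s) δ (U ∩ F)) :
    CoverSum Φ t (K * ε) δ F := by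
  obtain ⟨n, U, hcov, hdiam, hsum⟩ := h
  refine (CoverSum.iUnion (T := fun i => U i ∩ F) (fun x hx => ?_)
    fun i => hper (U i) (hdiam i).1 (hdiam i).2).mono subset_rfl ?_
  · obtain ⟨i, hi⟩ := mem_iUnion.1 (hcov hx)
    exact mem_iUnion.2 ⟨i, hi, hx⟩
  · rw [← Finset.mul_sum]
    exact mul_le_mul_of_nonneg_left hsum hK

lemma transfer_exponent_bounds {a b s t α γ δ d : ℝ} (hγ : 0 < γ) (hs : 0 ≤ s)
    (hsα : s ≤ α) (hst : s ≤ t) (h1 : γ * s / a ≤ t / b) (h2 : α ≤ t + γ * (α - s))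
    (hδ0 : 0 < δ) (hδ1 : δ ≤ 1) (hd1 : (δ ^ γ) ^ (1 / a) ≤ d) (hd2 : d ≤ δ ^ γ) :
    0 < d ∧ d ^ t ≤ d ^ s ∧ (δ ^ (1 / b)) ^ t ≤ d ^ s ∧ d ^ α * δ ^ t ≤ d ^ s * δ ^ α := by
  have hd : 0 < d := (by positivity : (0:ℝ) < (δ ^ γ) ^ (1 / a)).trans_le hd1
  have hdδ : d ^ (α - s) ≤ δ ^ (γ * (α - s)) := by
    rw [Real.rpow_mul hδ0.le]
    exact Real.rpow_le_rpow hd.le hd2 (by linarith)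
  refine ⟨hd, Real.rpow_le_rpow_of_exponent_ge hd (hd2.trans (Real.rpow_le_one hδ0.le hδ1
    hγ.le)) hst, ?_, ?_⟩
  · calc (δ ^ (1 / b)) ^ t = δ ^ (t / b) := by rw [← Real.rpow_mul hδ0.le]; ring_nf
      _ ≤ δ ^ (γ * s / a) := Real.rpow_le_rpow_of_exponent_ge hδ0 hδ1 h1
      _ = ((δ ^ γ) ^ (1 / a)) ^ s := by rw [← Real.rpow_mul hδ0.le, ← Real.rpow_mul hδ0.le]; ring_nf
      _ ≤ d ^ s := Real.rpow_le_rpow (by positivity) hd1 hs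
  · calc d ^ α * δ ^ t = d ^ s * (d ^ (α - s) * δ ^ t) := by
          rw [← mul_assoc, ← Real.rpow_add hd]; ring_nf
      _ ≤ d ^ s * (δ ^ (γ * (α - s)) * δ ^ t) := by gcongr
      _ = d ^ s * δ ^ (γ * (α - s) + t) := by rw [Real.rpow_add hδ0]
      _ ≤ d ^ s * δ ^ α := mul_le_mul_of_nonneg_left
          (Real.rpow_le_rpow_of_exponent_ge hδ0 hδ1 (by linarith)) (by positivity)

lemma eventually_mul_rpow_le_half {κ b : ℝ} (hb0 : 0 < b) (hb1 : b < 1) :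
    ∀ᶠ δ in 𝓝[>] (0:ℝ), κ * δ ^ (1 / b) ≤ δ / 2 := by
  have hp : 0 < 1 / b - 1 := by rw [sub_pos, lt_div_iff₀ hb0]; linarith
  filter_upwards [eventually_const_mul_rpow_le hp (2 * κ) one_pos, eventually_mem_nhdsWithin]
    with δ hδ (hδ0 : 0 < δ)
  calc κ * δ ^ (1 / b) = 2 * κ * δ ^ (1 / b - 1) * δ / 2 := by
        rw [mul_assoc (2 * κ), ← Real.rpow_add_one hδ0.ne']; ring_nf
    _ ≤ 1 * δ / 2 := by gcongr
    _ = δ / 2 := by ring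

lemma eventually_coverSum_transfer {F : Set X} (hF : TotallyBounded F) {α C κ : ℝ}
    (hC : ∀ x ∈ F, ∀ r R : ℝ, 0 < r → r < R → (coverNum (ball x R ∩ F) r : ℝ) ≤ C * (R / r) ^ α)
    (hC0 : 0 ≤ C) (hκ : 0 ≤ κ) (hfat : ∀ᶠ m in 𝓝[>] 0, FattensAt X κ m) {a b s t γ : ℝ}
    (hb0 : 0 < b) (hb1 : b < 1) (hγ : 0 < γ) (hs : 0 ≤ s) (hsα : s ≤ α)
    (hst : s ≤ t) (h1 : γ * s / a ≤ t / b) (h2 : α ≤ t + γ * (α - s)) :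
    ∀ᶠ δ in 𝓝[>] 0, ∀ ε, CoverSum (· ^ (1 / a)) s ε (δ ^ γ) F →
      CoverSum (· ^ (1 / b)) t (((1 + κ) ^ t + C * 4 ^ α) * ε) δ F := by
  filter_upwards [eventually_mem_Ioo_zero_one, eventually_mul_rpow_le_half (κ := κ) hb0 hb1,
    (tendsto_rpow_nhdsGT_zero (one_div_pos.2 hb0)).eventually hfat] with δ hδ hsmall hfatδ ε hcov
  refine hcov.refine (by positivity) fun U hU1 hU2 => ?_
  obtain ⟨hd, hUt, hΦt, hUα⟩ :=
    transfer_exponent_bounds hγ hs hsα hst h1 h2 hδ.1 hδ.2.le hU1 hU2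
  exact coverSum_inter_of_diam_pos hF hC hC0 hκ (hs.trans hst) hδ.1
    (Real.rpow_pos_of_pos hδ.1 _).le hfatδ hsmall hd hUt hΦt hUα

end Transfer

/-- `γ = α a / (a α + s (b - a))` equalises the two constraints on `t`; both then read
`α s b / (a α + s (b - a)) ≤ t`, and the left side is at most `s + (b - a) α / (4 a)` by AM-GM. -/
lemma exists_transfer_exponent {a b s α t : ℝ} (ha : 0 < a) (hab : a ≤ b) (hs : 0 ≤ s)
    (hsα : s < α) (ht : s + (b - a) / (4 * a) * α < t) :
    ∃ γ, 0 < γ ∧ s ≤ t ∧ γ * s / a ≤ t / b ∧ α ≤ t + γ * (α - s) := by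
  have hα : 0 < α := hs.trans_lt hsα
  have hb : 0 < b := ha.trans_le hab
  set D := a * α + s * (b - a)
  have hD : 0 < D := by positivity
  have hm : α * s * b / D ≤ s + (b - a) / (4 * a) * α := by
    rw [div_le_iff₀ hD, ← sub_nonneg]
    have : (s + (b - a) / (4 * a) * α) * D - α * s * b
        = (b - a) * (a * (α - 2 * s) ^ 2 + s * α * (b - a)) / (4 * a) := by
      field_simp; ring
    rw [this]
    have := sub_nonneg.2 hab
    positivity
  have hsm : s ≤ α * s * b / D := by
    rw [le_div_iff₀ hD]
    nlinarith [mul_nonneg (mul_nonneg hs (sub_nonneg.2 hab)) (sub_nonneg.2 hsα.le)]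
  refine ⟨α * a / D, by positivity, by linarith, ?_, ?_⟩
  · rw [le_div_iff₀ hb]
    calc α * a / D * s / a * b = α * s * b / D := by field_simp
      _ ≤ t := by linarith
  · have : α - α * a / D * (α - s) = α * s * b / D := by field_simp; ring
    linarith

section Exponents

variable {X : Type*} [MetricSpace X]

def upperExponents (Φ : ℝ → ℝ) (F : Set X) : Set ℝ :=
  {s | 0 ≤ s ∧ ∀ ε > 0, ∀ᶠ δ in 𝓝[>] 0, CoverSum Φ s ε δ F}

def lowerExponents (Φ : ℝ → ℝ) (F : Set X) : Set ℝ :=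
  {s | 0 ≤ s ∧ ∀ ε > 0, ∃ᶠ δ in 𝓝[>] 0, CoverSum Φ s ε δ F}

lemma upperPhiDim_eq_sInf (Φ : ℝ → ℝ) (F : Set X) :
    upperPhiDim Φ F = sInf (upperExponents Φ F) := by
  simp only [upperExponents, hasBasis_nhdsGT_zero_Ioc.eventually_iff]
  rfl

lemma lowerPhiDim_eq_sInf (Φ : ℝ → ℝ) (F : Set X) :
    lowerPhiDim Φ F = sInf (lowerExponents Φ F) := by
  simp only [lowerExponents, hasBasis_nhdsGT_zero_Ioc.frequently_iff]
  rfl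

end Exponents

section ExponentTransfer

variable {X : Type*} [MetricSpace X]

lemma CoverSum.of_le {Φ Ψ : ℝ → ℝ} {F : Set X} {s ε δ : ℝ} (h : CoverSum Ψ s ε δ F)
    (hΦΨ : Φ δ ≤ Ψ δ) : CoverSum Φ s ε δ F := by
  obtain ⟨n, U, hcov, hdiam, hsum⟩ := h
  exact ⟨n, U, hcov, fun i => ⟨hΦΨ.trans (hdiam i).1, (hdiam i).2⟩, hsum⟩

lemma eventually_coverSum_rpow_of_le {F : Set X} {s ε a b : ℝ} (ha : 0 < a) (hab : a ≤ b) :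
    ∀ᶠ δ in 𝓝[>] 0, CoverSum (· ^ (1 / b)) s ε δ F → CoverSum (· ^ (1 / a)) s ε δ F := by
  filter_upwards [eventually_mem_Ioo_zero_one] with δ hδ h
  exact h.of_le (Real.rpow_le_rpow_of_exponent_ge hδ.1 hδ.2.le (one_div_le_one_div_of_le ha hab))

lemma eventually_coverSum_of_coverNum_half_le {F : Set X} (hF : TotallyBounded F) {κ : ℝ}
    (hfat : ∀ᶠ m in 𝓝[>] 0, FattensAt X κ m) {a u t ε : ℝ} (ha0 : 0 < a) (ha1 : a < 1)
    (hut : u < t) (ht : 0 ≤ t) (hε : 0 < ε) :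
    ∀ᶠ δ in 𝓝[>] 0, (coverNum F (δ / 2) : ℝ) ≤ (δ / 2) ^ (-u) →
      CoverSum (· ^ (1 / a)) t ε δ F := by
  filter_upwards [eventually_mem_nhdsWithin, eventually_mul_rpow_le_half (κ := κ) ha0 ha1,
    (tendsto_rpow_nhdsGT_zero (one_div_pos.2 ha0)).eventually hfat,
    eventually_const_mul_rpow_le (sub_pos.2 hut) (2 ^ u) hε] with δ (hδ : 0 < δ) hsmall hfatδ hδε hN
  refine (hF.coverSum_coverNum_half ht hδ hfatδ hsmall).mono subset_rfl ?_
  calc (coverNum F (δ / 2) : ℝ) * δ ^ t ≤ (δ / 2) ^ (-u) * δ ^ t := by gcongr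
    _ = 2 ^ u * δ ^ (t - u) := by
      rw [Real.div_rpow hδ.le zero_le_two, Real.rpow_neg hδ.le, Real.rpow_neg zero_le_two,
        Real.rpow_sub hδ]
      field_simp
    _ ≤ ε := hδε

lemma coverNum_le_rpow_of_coverSum {F : Set X} {b t δ : ℝ} (ht : 0 ≤ t)
    (hδ : 0 < δ) (h : CoverSum (· ^ (1 / b)) t 1 δ F) : (coverNum F δ : ℝ) ≤ δ ^ (-(t / b)) := by
  have := h.coverNum_mul_rpow_le (Real.rpow_nonneg hδ.le _) ht
  rw [← Real.rpow_mul hδ.le, one_div_mul_eq_div] at this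
  rwa [Real.rpow_neg hδ.le, ← one_div, le_div_iff₀ (by positivity)]

lemma IsAssouadBound.exists_eventually_coverSum_transfer {F : Set X} (hF : TotallyBounded F)
    {α : ℝ} (hα : IsAssouadBound F α) {κ : ℝ} (hκ : 0 ≤ κ)
    (hfat : ∀ᶠ m in 𝓝[>] 0, FattensAt X κ m) {a b s t : ℝ} (ha : 0 < a) (hab : a ≤ b)
    (hb : b < 1) (hs : 0 ≤ s) (hsα : s < α) (ht : s + (b - a) / (4 * a) * α < t) :
    s ≤ t ∧ ∃ γ : ℝ, 0 < γ ∧ ∃ K : ℝ, 0 < K ∧ ∀ᶠ δ in 𝓝[>] 0, ∀ ε,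
      CoverSum (· ^ (1 / a)) s ε (δ ^ γ) F → CoverSum (· ^ (1 / b)) t (K * ε) δ F := by
  obtain ⟨-, C, hC0, hC⟩ := hα
  obtain ⟨γ, hγ, hst, h1, h2⟩ := exists_transfer_exponent ha hab hs hsα ht
  refine ⟨hst, γ, hγ, (1 + κ) ^ t + C * 4 ^ α, by positivity, ?_⟩
  exact eventually_coverSum_transfer hF hC hC0.le hκ hfat (ha.trans_le hab) hb hγ hs hsα.le hst
    h1 h2

end ExponentTransfer

section RealLemmas

lemma csInf_le_csInf_add_mul {E E' : Set ℝ} {A κ : ℝ} (hE : E.Nonempty) (hE' : BddBelow E')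
    (hκ : 0 ≤ κ) (hEA : sInf E ≤ A)
    (h : ∀ α, A < α → ∀ s ∈ E, s < α → ∀ t, s + κ * α < t → t ∈ E') :
    sInf E' ≤ sInf E + κ * A := by
  refine le_of_forall_gt_imp_ge_of_dense fun t ht => ?_
  set η := (t - (sInf E + κ * A)) / (2 * (1 + κ))
  have hη : 0 < η := div_pos (sub_pos.2 ht) (by positivity)
  have hηκ : η * (1 + κ) = (t - (sInf E + κ * A)) / 2 := by simp only [η]; field_simp
  obtain ⟨s, hs, hsη⟩ := exists_lt_of_csInf_lt hE (lt_add_of_pos_right (sInf E) hη)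
  exact csInf_le hE' (h (A + η) (by linarith) s hs (by linarith) t (by nlinarith))

lemma abs_sub_le_mul_of_le_add {f : ℝ → ℝ} {θ K : ℝ} (hK : 0 ≤ K)
    (hmono : ∀ a b, θ ≤ a → a ≤ b → b < 1 → f a ≤ f b)
    (hlip : ∀ a b, θ ≤ a → a ≤ b → b < 1 → f b ≤ f a + K * (b - a))
    (hle : ∀ a, θ ≤ a → a < 1 → f a ≤ f 1) (hge : ∀ b, θ ≤ b → b < 1 → b * f 1 ≤ f b) :
    ∀ a ∈ Icc θ 1, ∀ b ∈ Icc θ 1, |f a - f b| ≤ K * |a - b| := by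
  have key : ∀ a b, θ ≤ a → a ≤ b → b ≤ 1 → f a ≤ f b ∧ f b ≤ f a + K * (b - a) := by
    intro a b ha hab hb
    rcases hb.lt_or_eq with hb | rfl
    · exact ⟨hmono a b ha hab hb, hlip a b ha hab hb⟩
    rcases hab.lt_or_eq with hab | rfl
    · refine ⟨hle a ha hab, ?_⟩
      have hlim : Tendsto (fun c => c * f 1) (𝓝[<] 1) (𝓝 (f 1)) := by
        simpa using ((tendsto_id (x := 𝓝 (1:ℝ))).mul_const (f 1)).mono_left nhdsWithin_le_nhds
      refine le_of_tendsto hlim ?_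
      filter_upwards [Ioo_mem_nhdsLT hab] with c hc
      calc c * f 1 ≤ f c := hge c (ha.trans hc.1.le) hc.2
        _ ≤ f a + K * (c - a) := hlip a c ha hc.1.le hc.2
        _ ≤ f a + K * (1 - a) := by gcongr; exact hc.2.le
    · simp
  intro a ha b hb
  rcases le_total a b with hab | hab
  · obtain ⟨h1, h2⟩ := key a b ha.1 hab hb.2
    rw [abs_sub_comm a b, abs_of_nonneg (sub_nonneg.2 hab), abs_le]
    constructor <;> nlinarith [mul_nonneg hK (sub_nonneg.2 hab)]
  · obtain ⟨h1, h2⟩ := key b a hb.1 hab ha.2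
    rw [abs_of_nonneg (sub_nonneg.2 hab), abs_le]
    constructor <;> nlinarith [mul_nonneg hK (sub_nonneg.2 hab)]

lemma abs_sub_le_of_exponents {E : ℝ → Set ℝ} {f : ℝ → ℝ} {θ A B : ℝ} (hθ : 0 < θ)
    (hA : 0 ≤ A) (hBA : B ≤ A) (hf : ∀ a ∈ Ioo 0 1, f a = sInf (E a)) (hf1 : f 1 = B)
    (hE0 : ∀ a, ∀ s ∈ E a, 0 ≤ s) (hEB : ∀ a ∈ Ioo 0 1, ∀ t, B < t → t ∈ E a)
    (hanti : ∀ a b, 0 < a → a ≤ b → b < 1 → E b ⊆ E a)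
    (htransfer : ∀ a b, 0 < a → a ≤ b → b < 1 → ∀ α, A < α → ∀ s ∈ E a, s < α →
      ∀ t, s + (b - a) / (4 * a) * α < t → t ∈ E b)
    (hbox : ∀ b ∈ Ioo 0 1, ∀ t ∈ E b, b * B ≤ t) :
    ∀ a ∈ Icc θ 1, ∀ b ∈ Icc θ 1, |f a - f b| ≤ A / (4 * θ) * |a - b| := by
  have hbdd : ∀ a, BddBelow (E a) := fun a => ⟨0, hE0 a⟩
  have hne : ∀ a ∈ Ioo 0 1, (E a).Nonempty := fun a ha => ⟨B + 1, hEB a ha _ (lt_add_one B)⟩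
  have hB : ∀ a ∈ Ioo 0 1, sInf (E a) ≤ B := fun a ha =>
    le_of_forall_gt_imp_ge_of_dense fun t ht => csInf_le (hbdd a) (hEB a ha t ht)
  refine abs_sub_le_mul_of_le_add (by positivity) (fun a b ha hab hb => ?_)
    (fun a b ha hab hb => ?_) (fun a ha ha1 => ?_) (fun b hb hb1 => ?_)
  · have ha0 := hθ.trans_le ha
    rw [hf a ⟨ha0, hab.trans_lt hb⟩, hf b ⟨ha0.trans_le hab, hb⟩]
    exact csInf_le_csInf (hbdd a) (hne b ⟨ha0.trans_le hab, hb⟩) (hanti a b ha0 hab hb)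
  · have ha0 := hθ.trans_le ha
    have ha1 : a ∈ Ioo 0 1 := ⟨ha0, hab.trans_lt hb⟩
    rw [hf a ha1, hf b ⟨ha0.trans_le hab, hb⟩]
    have hκ : (b - a) / (4 * a) * A ≤ A / (4 * θ) * (b - a) := by
      rw [div_mul_eq_mul_div, div_mul_eq_mul_div, mul_comm A]
      gcongr
    have := csInf_le_csInf_add_mul (hne a ha1) (hbdd b)
      (div_nonneg (sub_nonneg.2 hab) (by positivity)) ((hB a ha1).trans hBA)
      (htransfer a b ha0 hab hb)
    linarith
  · rw [hf a ⟨hθ.trans_le ha, ha1⟩, hf1]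
    exact hB a ⟨hθ.trans_le ha, ha1⟩
  · rw [hf1, hf b ⟨hθ.trans_le hb, hb1⟩]
    exact le_csInf (hne b ⟨hθ.trans_le hb, hb1⟩) (hbox b ⟨hθ.trans_le hb, hb1⟩)

end RealLemmas

section UpperDimensions

variable {X : Type*} [MetricSpace X] {F : Set X}

lemma upperBoxDim_nonneg (hbdd : IsBoundedUnder (· ≤ ·) (𝓝[>] 0) (coverDimRatio F)) :
    0 ≤ upperBoxDim F :=
  le_limsup_of_frequently_le
    (eventually_mem_Ioo_zero_one.mono fun _ => coverDimRatio_nonneg F).frequently hbdd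

lemma upperExponents_rpow_anti {a b : ℝ} (ha : 0 < a) (hab : a ≤ b) :
    upperExponents (· ^ (1 / b)) F ⊆ upperExponents (· ^ (1 / a)) F := fun _ hs =>
  ⟨hs.1, fun ε hε => (hs.2 ε hε).mp (eventually_coverSum_rpow_of_le ha hab)⟩

lemma mem_upperExponents_of_eventually_coverNum_le (hF : TotallyBounded F) {κ : ℝ}
    (hfat : ∀ᶠ m in 𝓝[>] 0, FattensAt X κ m) {a u t : ℝ} (ha0 : 0 < a) (ha1 : a < 1)
    (hu : 0 ≤ u) (hut : u < t) (h : ∀ᶠ δ in 𝓝[>] 0, (coverNum F δ : ℝ) ≤ δ ^ (-u)) :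
    t ∈ upperExponents (· ^ (1 / a)) F := by
  refine ⟨hu.trans hut.le, fun ε hε => ?_⟩
  rw [← map_div_const_nhdsGT_zero two_pos, eventually_map] at h
  exact h.mp (eventually_coverSum_of_coverNum_half_le hF hfat ha0 ha1 hut (hu.trans hut.le) hε)

lemma IsAssouadBound.mem_upperExponents (hF : TotallyBounded F) {α : ℝ}
    (hα : IsAssouadBound F α) {κ : ℝ} (hκ : 0 ≤ κ) (hfat : ∀ᶠ m in 𝓝[>] 0, FattensAt X κ m)
    {a b s t : ℝ} (ha : 0 < a) (hab : a ≤ b) (hb : b < 1)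
    (hs : s ∈ upperExponents (· ^ (1 / a)) F) (hsα : s < α)
    (ht : s + (b - a) / (4 * a) * α < t) : t ∈ upperExponents (· ^ (1 / b)) F := by
  obtain ⟨hst, γ, hγ, K, hK, htransfer⟩ :=
    hα.exists_eventually_coverSum_transfer hF hκ hfat ha hab hb hs.1 hsα ht
  refine ⟨hs.1.trans hst, fun ε hε => ?_⟩
  have h := hs.2 (ε / K) (div_pos hε hK)
  rw [← map_rpow_nhdsGT_zero hγ, eventually_map] at h
  filter_upwards [h, htransfer] with δ hδ htransferδ
  simpa [mul_div_cancel₀ ε hK.ne'] using htransferδ _ hδ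

lemma upperBoxDim_le_div_of_mem_upperExponents (hne : F.Nonempty) (hF : TotallyBounded F)
    {b t : ℝ} (ht : t ∈ upperExponents (· ^ (1 / b)) F) : upperBoxDim F ≤ t / b :=
  upperBoxDim_le_of_eventually hne hF (((ht.2 1 one_pos).and eventually_mem_nhdsWithin).mono
    fun _ h => coverNum_le_rpow_of_coverSum ht.1 h.2 h.1)

lemma upperThetaDim_abs_sub_le (hne : F.Nonempty) (hF : TotallyBounded F)
    (hA : ∃ α, IsAssouadBound F α) {κ : ℝ} (hκ : 0 ≤ κ)
    (hfat : ∀ᶠ m in 𝓝[>] 0, FattensAt X κ m) {θ : ℝ} (hθ : 0 < θ) :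
    ∀ a ∈ Icc θ 1, ∀ b ∈ Icc θ 1,
      |upperThetaDim a F - upperThetaDim b F| ≤ assouadDim F / (4 * θ) * |a - b| := by
  have hbdd : IsBoundedUnder (· ≤ ·) (𝓝[>] 0) (coverDimRatio F) := by
    obtain ⟨α, hα⟩ := hA
    exact isBoundedUnder_coverDimRatio hne hF (hα.eventually_coverNum_le hne hF (lt_add_one α))
  have hdim : ∀ a ∈ Ioo (0:ℝ) 1, upperThetaDim a F = sInf (upperExponents (· ^ (1 / a)) F) :=
    fun a ha => by rw [upperThetaDim, if_neg ha.1.ne', if_neg ha.2.ne, upperPhiDim_eq_sInf]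
  have hbox : ∀ a ∈ Ioo (0:ℝ) 1, ∀ t, upperBoxDim F < t → t ∈ upperExponents (· ^ (1 / a)) F :=
    fun a ha t ht => mem_upperExponents_of_eventually_coverNum_le hF hfat ha.1 ha.2
      (by linarith [upperBoxDim_nonneg hbdd] : 0 ≤ (upperBoxDim F + t) / 2)
      (add_div_two_lt_right.2 ht)
      (eventually_coverNum_le_of_upperBoxDim_lt hne hF hbdd (left_lt_add_div_two.2 ht))
  exact abs_sub_le_of_exponents hθ (assouadDim_nonneg hA) (upperBoxDim_le_assouadDim hne hF hA)
    hdim (by simp [upperThetaDim]) (fun _ _ hs => hs.1) hbox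
    (fun a b ha hab _ => upperExponents_rpow_anti ha hab)
    (fun a b ha hab hb β hβ s hs hsβ t ht =>
      (isAssouadBound_of_assouadDim_lt hA hβ).mem_upperExponents hF hκ hfat ha hab hb hs hsβ ht)
    (fun b hb t ht => (le_div_iff₀' hb.1).1 (upperBoxDim_le_div_of_mem_upperExponents hne hF ht))

end UpperDimensions

section LowerDimensions

variable {X : Type*} [MetricSpace X] {F : Set X}

lemma lowerBoxDim_nonneg (hbdd : IsBoundedUnder (· ≤ ·) (𝓝[>] 0) (coverDimRatio F)) :
    0 ≤ lowerBoxDim F :=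
  le_liminf_of_le hbdd.isCoboundedUnder_ge
    (eventually_mem_Ioo_zero_one.mono fun _ => coverDimRatio_nonneg F)

lemma lowerExponents_rpow_anti {a b : ℝ} (ha : 0 < a) (hab : a ≤ b) :
    lowerExponents (· ^ (1 / b)) F ⊆ lowerExponents (· ^ (1 / a)) F := fun _ hs =>
  ⟨hs.1, fun ε hε => (hs.2 ε hε).mp (eventually_coverSum_rpow_of_le ha hab)⟩

lemma mem_lowerExponents_of_frequently_coverNum_le (hF : TotallyBounded F) {κ : ℝ}
    (hfat : ∀ᶠ m in 𝓝[>] 0, FattensAt X κ m) {a u t : ℝ} (ha0 : 0 < a) (ha1 : a < 1)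
    (hu : 0 ≤ u) (hut : u < t) (h : ∃ᶠ δ in 𝓝[>] 0, (coverNum F δ : ℝ) ≤ δ ^ (-u)) :
    t ∈ lowerExponents (· ^ (1 / a)) F := by
  refine ⟨hu.trans hut.le, fun ε hε => ?_⟩
  rw [← map_div_const_nhdsGT_zero two_pos, frequently_map] at h
  exact h.mp (eventually_coverSum_of_coverNum_half_le hF hfat ha0 ha1 hut (hu.trans hut.le) hε)

lemma IsAssouadBound.mem_lowerExponents (hF : TotallyBounded F) {α : ℝ}
    (hα : IsAssouadBound F α) {κ : ℝ} (hκ : 0 ≤ κ) (hfat : ∀ᶠ m in 𝓝[>] 0, FattensAt X κ m)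
    {a b s t : ℝ} (ha : 0 < a) (hab : a ≤ b) (hb : b < 1)
    (hs : s ∈ lowerExponents (· ^ (1 / a)) F) (hsα : s < α)
    (ht : s + (b - a) / (4 * a) * α < t) : t ∈ lowerExponents (· ^ (1 / b)) F := by
  obtain ⟨hst, γ, hγ, K, hK, htransfer⟩ :=
    hα.exists_eventually_coverSum_transfer hF hκ hfat ha hab hb hs.1 hsα ht
  refine ⟨hs.1.trans hst, fun ε hε => ?_⟩
  have h := hs.2 (ε / K) (div_pos hε hK)
  rw [← map_rpow_nhdsGT_zero hγ, frequently_map] at h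
  exact h.mp (htransfer.mono fun δ htransferδ hδ => by
    simpa [mul_div_cancel₀ ε hK.ne'] using htransferδ _ hδ)

lemma lowerBoxDim_le_div_of_mem_lowerExponents (hne : F.Nonempty) (hF : TotallyBounded F)
    {b t : ℝ} (ht : t ∈ lowerExponents (· ^ (1 / b)) F) : lowerBoxDim F ≤ t / b :=
  lowerBoxDim_le_of_frequently hne hF (((ht.2 1 one_pos).and_eventually
    eventually_mem_nhdsWithin).mono fun _ h => coverNum_le_rpow_of_coverSum ht.1 h.2 h.1)

lemma lowerThetaDim_abs_sub_le (hne : F.Nonempty) (hF : TotallyBounded F)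
    (hA : ∃ α, IsAssouadBound F α) {κ : ℝ} (hκ : 0 ≤ κ)
    (hfat : ∀ᶠ m in 𝓝[>] 0, FattensAt X κ m) {θ : ℝ} (hθ : 0 < θ) :
    ∀ a ∈ Icc θ 1, ∀ b ∈ Icc θ 1,
      |lowerThetaDim a F - lowerThetaDim b F| ≤ assouadDim F / (4 * θ) * |a - b| := by
  have hbdd : IsBoundedUnder (· ≤ ·) (𝓝[>] 0) (coverDimRatio F) := by
    obtain ⟨α, hα⟩ := hA
    exact isBoundedUnder_coverDimRatio hne hF (hα.eventually_coverNum_le hne hF (lt_add_one α))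
  have hdim : ∀ a ∈ Ioo (0:ℝ) 1, lowerThetaDim a F = sInf (lowerExponents (· ^ (1 / a)) F) :=
    fun a ha => by rw [lowerThetaDim, if_neg ha.1.ne', if_neg ha.2.ne, lowerPhiDim_eq_sInf]
  have hbox : ∀ a ∈ Ioo (0:ℝ) 1, ∀ t, lowerBoxDim F < t → t ∈ lowerExponents (· ^ (1 / a)) F :=
    fun a ha t ht => mem_lowerExponents_of_frequently_coverNum_le hF hfat ha.1 ha.2
      (by linarith [lowerBoxDim_nonneg hbdd] : 0 ≤ (lowerBoxDim F + t) / 2)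
      (add_div_two_lt_right.2 ht)
      (frequently_coverNum_le_of_lowerBoxDim_lt hne hF hbdd (left_lt_add_div_two.2 ht))
  exact abs_sub_le_of_exponents hθ (assouadDim_nonneg hA) (lowerBoxDim_le_assouadDim hne hF hA)
    hdim (by simp [lowerThetaDim]) (fun _ _ hs => hs.1) hbox
    (fun a b ha hab _ => lowerExponents_rpow_anti ha hab)
    (fun a b ha hab hb β hβ s hs hsβ t ht =>
      (isAssouadBound_of_assouadDim_lt hA hβ).mem_lowerExponents hF hκ hfat ha hab hb hs hsβ ht)
    (fun b hb t ht => (le_div_iff₀' hb.1).1 (lowerBoxDim_le_div_of_mem_lowerExponents hne hF ht))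

end LowerDimensions

theorem stmt7 {X : Type*} [MetricSpace X] [Nontrivial X] (hX : UniformlyPerfect X)
    (F : Set X) (hne : F.Nonempty) (hTB : TotallyBounded F)
    (hAfin : ∃ α, IsAssouadBound F α) (hApos : 0 < assouadDim F)
    (θ : ℝ) (hθ : θ ∈ Set.Ioo (0:ℝ) 1) :
    (∀ a ∈ Set.Icc θ 1, ∀ b ∈ Set.Icc θ 1,
      |upperThetaDim a F - upperThetaDim b F| ≤ assouadDim F / (4 * θ) * |a - b|) ∧
    (∀ a ∈ Set.Icc θ 1, ∀ b ∈ Set.Icc θ 1,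
      |lowerThetaDim a F - lowerThetaDim b F| ≤ assouadDim F / (4 * θ) * |a - b|) := by
  have := boundedSpace_of_assouadDim_pos hApos
  obtain ⟨κ, hκ, hfat⟩ := hX.eventually_fattensAt
  exact ⟨upperThetaDim_abs_sub_le hne hTB hAfin hκ hfat hθ.1,
    lowerThetaDim_abs_sub_le hne hTB hAfin hκ hfat hθ.1⟩
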